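/- Let q ∈ (0,∞), let (X,ρ,μ) be a quasi-metric measure space, let Ω ⊆ X be a measurable set that is bounded, i.e., sup_{x,y∈Ω} ρ(x,y) < ∞, let N be a ball quasi-Banach function quasi-norm on (X,μ), and let ‖·‖_{Y(Ω)} denote its restriction to Ω. If f is a measurable function on Ω for which there exists s₀ ∈ (0,1) with ‖(∫_Ω |f(·)−f(y)|^q/(U(·,y)·ρ(·,y)^{s₀q}) dμ(y))^{1/q}‖_{Y(Ω)} < ∞, then lim_{s→0⁺} s^{1/q}·‖(∫_Ω |f(·)−f(y)|^q/(U(·,y)·ρ(·,y)^{sq}) dμ(y))^{1/q}‖_{Y(Ω)} = 0. -/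

import Mathlib

noncomputable section

open MeasureTheory Filter Set
open scoped ENNReal NNReal Topology

namespace Paper

variable {X : Type*} [MeasurableSpace X]

/-- The ball with center `x` and radius `r` for the quasi-metric `ρ`. -/
def ball (ρ : X → X → ℝ) (x : X) (r : ℝ) : Set X := {y | ρ x y < r}

/-- `(X, ρ, μ)` is a quasi-metric measure space with quasi-triangle constant `K₀`:
`ρ` is a quasi-metric with constant `K₀` and all `ρ`-balls are `μ`-measurable. -/
structure IsQuasiMetricMeasure (ρ : X → X → ℝ) (μ : Measure X) (K₀ : ℝ) : Prop where
  nonneg : ∀ x y, 0 ≤ ρ x y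
  eq_zero_iff : ∀ x y, ρ x y = 0 ↔ x = y
  symm : ∀ x y, ρ x y = ρ y x
  one_le : 1 ≤ K₀
  triangle : ∀ x y z, ρ x z ≤ K₀ * (ρ x y + ρ y z)
  measurableSet_ball : ∀ x r, MeasurableSet (ball ρ x r)

/-- `U(x,y) := min{μ(B(x,ρ(x,y))), μ(B(y,ρ(x,y)))}`. -/
def U (ρ : X → X → ℝ) (μ : Measure X) (x y : X) : ℝ≥0∞ :=
  min (μ (ball ρ x (ρ x y))) (μ (ball ρ y (ρ x y)))

/-- `N` is a ball quasi-Banach function quasi-norm on `(X, μ)` (balls taken with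
respect to `ρ`), with quasi-triangle constant `κ ∈ [1,∞)`. -/
structure IsBallQBFNorm (ρ : X → X → ℝ) (μ : Measure X)
    (N : (X → ℝ≥0∞) → ℝ≥0∞) (κ : ℝ≥0∞) : Prop where
  one_le_kappa : 1 ≤ κ
  kappa_lt_top : κ < ∞
  eq_zero_iff : ∀ f : X → ℝ≥0∞, N f = 0 ↔ f =ᵐ[μ] 0
  mono : ∀ f g : X → ℝ≥0∞, (∀ᵐ x ∂μ, g x ≤ f x) → N g ≤ N f
  iSup_seq : ∀ F : ℕ → X → ℝ≥0∞, (∀ᵐ x ∂μ, Monotone fun m => F m x) →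
    N (fun x => ⨆ m, F m x) = ⨆ m, N (F m)
  indicator_ball_lt_top : ∀ (x : X) (r : ℝ), 0 < r →
    N ((ball ρ x r).indicator fun _ => 1) < ∞
  smul : ∀ (c : ℝ≥0) (f : X → ℝ≥0∞), N (fun x => c * f x) = c * N f
  add_le : ∀ f g : X → ℝ≥0∞, N (fun x => f x + g x) ≤ κ * (N f + N g)

/-- The Maz'ya–Shaposhnikova integrand on a set `E`:
`x ↦ (∫_E |f(x) − f(y)|^q / (U(x,y) ρ(x,y)^{sq}) dμ(y))^{1/q}`. -/
def sob (ρ : X → X → ℝ) (μ : Measure X) (E : Set X) (f : X → ℝ) (q s : ℝ) (x : X) :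
    ℝ≥0∞ :=
  (∫⁻ y in E, ENNReal.ofReal |f x - f y| ^ q /
      (U ρ μ x y * ENNReal.ofReal (ρ x y) ^ (s * q)) ∂μ) ^ (1 / q)

/-!
On a bounded set the kernel `ρ(x,y)^{-sq}` is dominated, uniformly in `s ∈ (0, s₀]`, by a
constant multiple of `ρ(x,y)^{-s₀q}`: where `ρ ≤ 1` the smaller exponent helps, and where
`1 < ρ ≤ R` the loss is at most `R^{s₀q}`. Hence `N(sob_s) ≤ R^{s₀} N(sob_{s₀}) < ∞` for all
`s ∈ (0, s₀]`, and the factor `s^{1/q}` forces the limit to vanish.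
-/

lemma ENNReal.rpow_le_rpow_mul_rpow {r R : ℝ≥0∞} {t t₀ : ℝ} (hr : r ≤ R) (hR : 1 ≤ R) (ht : 0 ≤ t)
    (htt₀ : t ≤ t₀) : r ^ t₀ ≤ R ^ t₀ * r ^ t :=
  calc r ^ t₀ = r ^ t * r ^ (t₀ - t) := by
        rw [← ENNReal.rpow_add_of_nonneg _ _ ht (sub_nonneg.2 htt₀), add_sub_cancel]
    _ ≤ r ^ t * R ^ t₀ := by
        gcongr
        exact (ENNReal.rpow_le_rpow hr (sub_nonneg.2 htt₀)).trans
          (ENNReal.rpow_le_rpow_of_exponent_le hR (by linarith))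
    _ = R ^ t₀ * r ^ t := mul_comm _ _

lemma ENNReal.div_le_mul_div_of_le_mul {a b b' C : ℝ≥0∞} (hC₀ : C ≠ 0) (hC : C ≠ ∞)
    (hb : b' ≤ C * b) : a / b ≤ C * (a / b') :=
  calc a / b = C * a / (C * b) := (ENNReal.mul_div_mul_left _ _ hC₀ hC).symm
    _ ≤ C * a / b' := by gcongr
    _ = C * (a / b') := mul_div_assoc _ _ _

lemma sob_le_rpow_mul_sob {ρ : X → X → ℝ} {μ : Measure X} {Ω : Set X} {R : ℝ≥0∞}
    (hΩ : MeasurableSet Ω) (hρ : ∀ x ∈ Ω, ∀ y ∈ Ω, ENNReal.ofReal (ρ x y) ≤ R)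
    (hR : 1 ≤ R) (hR_top : R ≠ ∞) (f : X → ℝ) {q s s₀ : ℝ} (hq : 0 < q) (hs : 0 ≤ s)
    (hss₀ : s ≤ s₀) {x : X} (hx : x ∈ Ω) :
    sob ρ μ Ω f q s x ≤ R ^ s₀ * sob ρ μ Ω f q s₀ x := by
  have hC₀ : R ^ (s₀ * q) ≠ 0 := (ENNReal.rpow_pos (zero_lt_one.trans_le hR) hR_top).ne'
  have hC : R ^ (s₀ * q) ≠ ∞ :=
    ENNReal.rpow_ne_top_of_nonneg (mul_nonneg (hs.trans hss₀) hq.le) hR_top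
  have hint : (∫⁻ y in Ω, ENNReal.ofReal |f x - f y| ^ q /
        (U ρ μ x y * ENNReal.ofReal (ρ x y) ^ (s * q)) ∂μ) ≤
      R ^ (s₀ * q) * ∫⁻ y in Ω, ENNReal.ofReal |f x - f y| ^ q /
        (U ρ μ x y * ENNReal.ofReal (ρ x y) ^ (s₀ * q)) ∂μ := by
    rw [← lintegral_const_mul' _ _ hC]
    refine setLIntegral_mono' hΩ fun y hy => ENNReal.div_le_mul_div_of_le_mul hC₀ hC ?_
    calc U ρ μ x y * ENNReal.ofReal (ρ x y) ^ (s₀ * q)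
        ≤ U ρ μ x y * (R ^ (s₀ * q) * ENNReal.ofReal (ρ x y) ^ (s * q)) := by
          gcongr
          exact ENNReal.rpow_le_rpow_mul_rpow (hρ x hx y hy) hR (by positivity)
            (mul_le_mul_of_nonneg_right hss₀ hq.le)
      _ = R ^ (s₀ * q) * (U ρ μ x y * ENNReal.ofReal (ρ x y) ^ (s * q)) := mul_left_comm _ _ _
  calc sob ρ μ Ω f q s x ≤ (R ^ (s₀ * q) * ∫⁻ y in Ω, ENNReal.ofReal |f x - f y| ^ q /
        (U ρ μ x y * ENNReal.ofReal (ρ x y) ^ (s₀ * q)) ∂μ) ^ (1 / q) := by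
        unfold sob; gcongr
    _ = R ^ s₀ * sob ρ μ Ω f q s₀ x := by
        rw [sob, ENNReal.mul_rpow_of_nonneg _ _ (by positivity), ← ENNReal.rpow_mul,
          mul_one_div, mul_div_cancel_right₀ _ hq.ne']

lemma IsBallQBFNorm.le_mul_of_ae_le_mul {ρ : X → X → ℝ} {μ : Measure X}
    {N : (X → ℝ≥0∞) → ℝ≥0∞} {κ : ℝ≥0∞} (hN : IsBallQBFNorm ρ μ N κ) {f g : X → ℝ≥0∞}
    {c : ℝ≥0∞} (hc : c ≠ ∞) (h : ∀ᵐ x ∂μ, g x ≤ c * f x) : N g ≤ c * N f := by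
  lift c to ℝ≥0 using hc
  exact (hN.mono _ _ h).trans_eq (hN.smul c f)

lemma tendsto_ofReal_rpow_mul_nhdsGT_zero {p : ℝ} (hp : 0 < p) {B : ℝ≥0∞} (hB : B ≠ ∞) :
    Tendsto (fun s : ℝ => ENNReal.ofReal s ^ p * B) (𝓝[>] 0) (𝓝 0) := by
  have h := ENNReal.Tendsto.mul_const
    ((ENNReal.continuous_ofReal.tendsto 0).ennrpow_const p) (Or.inr hB)
  rw [ENNReal.ofReal_zero, ENNReal.zero_rpow_of_pos hp, zero_mul] at h
  exact h.mono_left nhdsWithin_le_nhds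

theorem statement0 (ρ : X → X → ℝ) (μ : Measure X)
    (Ω : Set X) (hΩ : MeasurableSet Ω)
    (hbdd : ∃ D : ℝ, ∀ x ∈ Ω, ∀ y ∈ Ω, ρ x y ≤ D)
    (q : ℝ) (hq : 0 < q)
    (N : (X → ℝ≥0∞) → ℝ≥0∞) (κ : ℝ≥0∞) (hN : IsBallQBFNorm ρ μ N κ)
    (f : X → ℝ)
    (hfin : ∃ s₀ ∈ Set.Ioo (0:ℝ) 1, N (Ω.indicator (sob ρ μ Ω f q s₀)) < ∞) :
    Tendsto (fun s : ℝ => ENNReal.ofReal s ^ (1 / q) * N (Ω.indicator (sob ρ μ Ω f q s)))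
      (𝓝[>] (0:ℝ)) (𝓝 0) := by
  obtain ⟨D, hD⟩ := hbdd
  obtain ⟨s₀, ⟨hs₀, -⟩, hfin⟩ := hfin
  set R := ENNReal.ofReal (max D 1)
  have hR : 1 ≤ R := ENNReal.one_le_ofReal.2 (le_max_right D 1)
  have hRs₀ : R ^ s₀ ≠ ∞ := ENNReal.rpow_ne_top_of_nonneg hs₀.le ENNReal.ofReal_ne_top
  have hρ : ∀ x ∈ Ω, ∀ y ∈ Ω, ENNReal.ofReal (ρ x y) ≤ R := fun x hx y hy =>
    ENNReal.ofReal_le_ofReal ((hD x hx y hy).trans (le_max_left D 1))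
  have hbound : ∀ s ∈ Set.Ioc 0 s₀, N (Ω.indicator (sob ρ μ Ω f q s)) ≤
      R ^ s₀ * N (Ω.indicator (sob ρ μ Ω f q s₀)) := by
    refine fun s hs => hN.le_mul_of_ae_le_mul hRs₀ (ae_of_all _ fun x => ?_)
    by_cases hx : x ∈ Ω
    · simpa only [Set.indicator_of_mem hx] using
        sob_le_rpow_mul_sob hΩ hρ hR ENNReal.ofReal_ne_top f hq hs.1.le hs.2 hx
    · simp only [Set.indicator_of_notMem hx, mul_zero, le_refl]
  refine tendsto_of_tendsto_of_tendsto_of_le_of_le' tendsto_const_nhds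
    (tendsto_ofReal_rpow_mul_nhdsGT_zero (one_div_pos.2 hq) (ENNReal.mul_ne_top hRs₀ hfin.ne))
    (Eventually.of_forall fun s => zero_le) ?_
  filter_upwards [Ioc_mem_nhdsGT hs₀] with s hs
  exact mul_le_mul_right (hbound s hs) _
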